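/- arXiv:0906.4755 — 2 statements merged into one kernel-verified Lean document; each statement's English description precedes it below -/
import Mathlib

section
/- The quantum f-relative entropy is convex in its second argument: S_f(ρ ‖ λσ₁ + (1-λ)σ₂) ≤ λ S_f(ρ‖σ₁) + (1-λ) S_f(ρ‖σ₂) for λ ∈ [0,1] and strictly positive ρ, σ₁, σ₂. -/
open Matrix Kronecker
open scoped ComplexOrder

noncomputable def applyFun {n : Type*} [Fintype n] [DecidableEq n]
    (f : ℝ → ℝ) (A : Matrix n n ℂ) : Matrix n n ℂ := by
  classical exact
    if hA : A.IsHermitian then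
      (hA.eigenvectorUnitary : Matrix n n ℂ) *
        Matrix.diagonal (fun i => (f (hA.eigenvalues i) : ℂ)) *
        (star (hA.eigenvectorUnitary : Matrix n n ℂ))
    else 0

noncomputable def msqrt {n : Type*} [Fintype n] [DecidableEq n]
    (A : Matrix n n ℂ) : Matrix n n ℂ := by
  classical exact if h : A.PosSemidef then
    (h.1.eigenvectorUnitary : Matrix n n ℂ) *
      Matrix.diagonal ((↑) ∘ (Real.sqrt ·) ∘ h.1.eigenvalues) *
      (star (h.1.eigenvectorUnitary : Matrix n n ℂ)) else 0

def vecOf {m n : Type*} (A : Matrix m n ℂ) : m × n → ℂ := fun p => A p.1 p.2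

noncomputable def Srel {n : Type*} [Fintype n] [DecidableEq n]
    (f : ℝ → ℝ) (ρ σ : Matrix n n ℂ) : ℝ :=
  (star (vecOf (msqrt ρ)) ⬝ᵥ (applyFun f (σ ⊗ₖ (ρ⁻¹)ᵀ) *ᵥ vecOf (msqrt ρ))).re

def OperatorConvexOn (I : Set ℝ) (f : ℝ → ℝ) : Prop :=
  ∀ (n : ℕ) (A B : Matrix (Fin n) (Fin n) ℂ) (hA : A.IsHermitian) (hB : B.IsHermitian),
    (∀ i, hA.eigenvalues i ∈ I) → (∀ i, hB.eigenvalues i ∈ I) →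
    ∀ lam : ℝ, 0 ≤ lam → lam ≤ 1 →
      ((lam : ℂ) • applyFun f A + ((1 - lam : ℝ) : ℂ) • applyFun f B -
        applyFun f ((lam : ℂ) • A + ((1 - lam : ℝ) : ℂ) • B)).PosSemidef

noncomputable def entf {n : Type*} [Fintype n] [DecidableEq n]
    (f : ℝ → ℝ) (ρ : Matrix n n ℂ) : ℝ :=
  -(Matrix.trace (ρ * applyFun f ρ⁻¹)).re

noncomputable def ptraceB {α β : Type*} [Fintype β]
    (M : Matrix (α × β) (α × β) ℂ) : Matrix α α ℂ :=
  Matrix.of fun i j => ∑ k, M (i, k) (j, k)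

noncomputable def ptraceA {α β : Type*} [Fintype α]
    (M : Matrix (α × β) (α × β) ℂ) : Matrix β β ℂ :=
  Matrix.of fun i j => ∑ k, M (k, i) (k, j)

def NonAffineOn (I : Set ℝ) (f : ℝ → ℝ) : Prop :=
  ¬ ∃ c b : ℝ, ∀ t ∈ I, f t = c * t + b

/-! `S_f(ρ‖σ)` is the value at the fixed vector `vec(√ρ)` of the quadratic form of
`f(σ ⊗ (ρ⁻¹)ᵀ)`, and `σ ↦ σ ⊗ (ρ⁻¹)ᵀ` is linear and preserves positive definiteness. Operator
convexity of `f` on `(0, ∞)` therefore makes `λ f(M₁) + (1 - λ) f(M₂) - f(λ M₁ + (1 - λ) M₂)`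
positive semidefinite for `Mᵢ = σᵢ ⊗ (ρ⁻¹)ᵀ`, and evaluating its quadratic form at `vec(√ρ)`
gives the inequality. -/

section
variable {ι κ : Type*} [Fintype ι] [DecidableEq ι] [Fintype κ] [DecidableEq κ]

theorem applyFun_eq_cfc (f : ℝ → ℝ) {A : Matrix ι ι ℂ} (hA : A.IsHermitian) :
    applyFun f A = cfc f A := by
  rw [hA.cfc_eq, IsHermitian.cfc, Unitary.conjStarAlgAut_apply, applyFun, dif_pos hA]
  rfl

def Matrix.reindexStarAlgEquiv (e : ι ≃ κ) : Matrix ι ι ℂ ≃⋆ₐ[ℂ] Matrix κ κ ℂ :=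
  .ofAlgEquiv (reindexAlgEquiv ℂ ℂ e) fun A => by
    simp [coe_reindexAlgEquiv, star_eq_conjTranspose, conjTranspose_submatrix]

theorem applyFun_submatrix (f : ℝ → ℝ) (e : κ ≃ ι) {A : Matrix ι ι ℂ} (hA : A.IsHermitian) :
    applyFun f (A.submatrix e e) = (applyFun f A).submatrix e e := by
  rw [applyFun_eq_cfc f hA, applyFun_eq_cfc f (hA.submatrix e)]
  exact (StarAlgHomClass.map_cfc (reindexStarAlgEquiv e.symm) f A
    ((finite_real_spectrum (A := A)).continuousOn f) (continuous_id.matrix_reindex _ _)).symm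

theorem Matrix.spectrum_real_submatrix_equiv (e : κ ≃ ι) (A : Matrix ι ι ℂ) :
    spectrum ℝ (A.submatrix e e) = spectrum ℝ A :=
  AlgEquiv.spectrum_eq (reindexAlgEquiv ℝ ℂ e.symm) A

theorem Matrix.PosDef.spectrum_subset_Ioi {A : Matrix ι ι ℂ} (hA : A.PosDef) :
    spectrum ℝ A ⊆ Set.Ioi 0 := by
  rw [hA.1.spectrum_real_eq_range_eigenvalues]
  rintro _ ⟨i, rfl⟩
  exact hA.eigenvalues_pos i

/-- `OperatorConvexOn` only speaks about matrices indexed by `Fin n`; it transfers to any finite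
index type because `applyFun` is `cfc`, which commutes with reindexing. -/
theorem OperatorConvexOn.posSemidef_sub {I : Set ℝ} {f : ℝ → ℝ} (hf : OperatorConvexOn I f)
    {A B : Matrix ι ι ℂ} (hA : A.IsHermitian) (hB : B.IsHermitian)
    (hAI : spectrum ℝ A ⊆ I) (hBI : spectrum ℝ B ⊆ I) {lam : ℝ} (hlam0 : 0 ≤ lam)
    (hlam1 : lam ≤ 1) :
    ((lam : ℂ) • applyFun f A + ((1 - lam : ℝ) : ℂ) • applyFun f B -
      applyFun f ((lam : ℂ) • A + ((1 - lam : ℝ) : ℂ) • B)).PosSemidef := by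
  set e := (Fintype.equivFin ι).symm
  have hA' : (A.submatrix e e).IsHermitian := hA.submatrix e
  have hB' : (B.submatrix e e).IsHermitian := hB.submatrix e
  have hAB : ((lam : ℂ) • A + ((1 - lam : ℝ) : ℂ) • B).IsHermitian :=
    (hA.smul (Complex.conj_ofReal lam)).add (hB.smul (Complex.conj_ofReal (1 - lam)))
  have key := hf _ _ _ hA' hB'
    (fun i => hAI (spectrum_real_submatrix_equiv e A ▸ hA'.eigenvalues_mem_spectrum_real i))
    (fun i => hBI (spectrum_real_submatrix_equiv e B ▸ hB'.eigenvalues_mem_spectrum_real i))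
    lam hlam0 hlam1
  have hcomb (X Y : Matrix ι ι ℂ) : ((lam : ℂ) • X + ((1 - lam : ℝ) : ℂ) • Y).submatrix e e =
      (lam : ℂ) • X.submatrix e e + ((1 - lam : ℝ) : ℂ) • Y.submatrix e e := rfl
  rw [applyFun_submatrix f e hA, applyFun_submatrix f e hB, ← hcomb, ← hcomb,
    applyFun_submatrix f e hAB] at key
  rw [← posSemidef_submatrix_equiv e]
  exact key

end

theorem Matrix.PosSemidef.re_dotProduct_mulVec_le {ι : Type*} [Fintype ι]
    {X Y Z : Matrix ι ι ℂ} {a b : ℝ}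
    (h : ((a : ℂ) • X + (b : ℂ) • Y - Z).PosSemidef) (v : ι → ℂ) :
    (star v ⬝ᵥ Z *ᵥ v).re ≤ a * (star v ⬝ᵥ X *ᵥ v).re + b * (star v ⬝ᵥ Y *ᵥ v).re := by
  have h0 := (Complex.nonneg_iff.mp (h.dotProduct_mulVec_nonneg v)).1
  simp only [sub_mulVec, add_mulVec, smul_mulVec, dotProduct_sub, dotProduct_add,
    dotProduct_smul, smul_eq_mul, Complex.sub_re, Complex.add_re, Complex.re_ofReal_mul] at h0
  linarith

/-- convexity of the quantum f-relative entropy in its second argument. -/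
theorem Srel_convex_second {d : ℕ} (f : ℝ → ℝ)
    (hf : OperatorConvexOn (Set.Ioi 0) f)
    (ρ σ₁ σ₂ : Matrix (Fin d) (Fin d) ℂ)
    (hρ : ρ.PosDef) (h1 : σ₁.PosDef) (h2 : σ₂.PosDef)
    (lam : ℝ) (hlam0 : 0 ≤ lam) (hlam1 : lam ≤ 1) :
    Srel f ρ ((lam : ℂ) • σ₁ + ((1 - lam : ℝ) : ℂ) • σ₂) ≤
      lam * Srel f ρ σ₁ + (1 - lam) * Srel f ρ σ₂ := by
  have hτ : ((ρ⁻¹)ᵀ).PosDef := hρ.inv.transpose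
  have hM₁ := h1.kronecker hτ
  have hM₂ := h2.kronecker hτ
  have hN := hf.posSemidef_sub hM₁.1 hM₂.1 hM₁.spectrum_subset_Ioi hM₂.spectrum_subset_Ioi
    hlam0 hlam1
  rw [← smul_kronecker, ← smul_kronecker, ← add_kronecker] at hN
  exact hN.re_dotProduct_mulVec_le (vecOf (msqrt ρ))
end

section
/- Sub-additivity: for strictly positive ρ₁, ρ₂, σ₁, σ₂ and operator convex f, S_f(ρ₁+ρ₂ ‖ σ₁+σ₂) ≤ S_f(ρ₁‖σ₁) + S_f(ρ₂‖σ₂). -/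
open Matrix Kronecker
open scoped ComplexOrder

/-!
Put `s = √(ρ₁ + ρ₂)`, `Cᵢ = s⁻¹ √ρᵢ`, `Vᵢ = 1 ⊗ Cᵢᵀ` and `Aᵢ = σᵢ ⊗ (ρᵢ⁻¹)ᵀ`. Then
`V₁ᴴ V₁ + V₂ᴴ V₂ = 1`, `V₁ᴴ A₁ V₁ + V₂ᴴ A₂ V₂ = (σ₁ + σ₂) ⊗ ((ρ₁ + ρ₂)⁻¹)ᵀ` and
`Vᵢ vec s = vec √ρᵢ`, so the inequality is the quadratic form at `vec s` of the Jensen operator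
inequality `f (∑ Vᵢᴴ Aᵢ Vᵢ) ≤ ∑ Vᵢᴴ f(Aᵢ) Vᵢ` of Hansen and Pedersen.

For an isometry `V` and `D = 1 - V Vᴴ`, the block matrices `U± = [[0, Vᴴ], [V, ±D]]` are unitary.
The average of `U± (1 ⊕ A) U±` is block diagonal with upper-left corner `Vᴴ A V`, while the
upper-left corner of `U± f(1 ⊕ A) U± = f (U± (1 ⊕ A) U±)` is `Vᴴ f(A) V`, so midpoint operator
convexity of `f` at the two conjugates gives the Jensen inequality.
-/


open Polynomial Unitary

section SpectralCalculus

variable {n m : Type*} [Fintype n] [DecidableEq n] [Fintype m] [DecidableEq m]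

lemma applyFun_of_isHermitian (f : ℝ → ℝ) {A : Matrix n n ℂ} (hA : A.IsHermitian) :
    applyFun f A = conjStarAlgAut ℂ _ hA.eigenvectorUnitary
      (diagonal fun i => (f (hA.eigenvalues i) : ℂ)) := by
  rw [applyFun, dif_pos hA]
  rfl

lemma aeval_diagonal (q : ℂ[X]) (μ : n → ℂ) :
    aeval (diagonal μ) q = diagonal fun i => q.eval (μ i) := by
  have := aeval_algHom_apply (diagonalAlgHom ℂ : (n → ℂ) →ₐ[ℂ] Matrix n n ℂ) μ q
  simp only [diagonalAlgHom_apply] at this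
  rw [this, aeval_pi_apply]
  simp only [coe_aeval_eq_eval]

lemma applyFun_eq_aeval (f : ℝ → ℝ) {A : Matrix n n ℂ} (hA : A.IsHermitian) (q : ℂ[X])
    (hq : ∀ i, q.eval (hA.eigenvalues i : ℂ) = f (hA.eigenvalues i)) :
    applyFun f A = aeval A q := by
  conv_rhs => rw [hA.spectral_theorem]
  rw [applyFun_of_isHermitian f hA, aeval_algHom_apply, aeval_diagonal]
  simp only [Function.comp_apply, RCLike.ofReal_eq_complex_ofReal, hq]

lemma exists_eval_ofReal_eq (f : ℝ → ℝ) {s : Set ℝ} (hs : s.Finite) :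
    ∃ q : ℂ[X], ∀ x ∈ s, q.eval (x : ℂ) = f x := by
  classical
  refine ⟨Lagrange.interpolate (hs.toFinset.image (↑)) id (fun z => (f z.re : ℂ)),
    fun x hx => ?_⟩
  simpa using Lagrange.eval_interpolate_at_node (fun z => (f z.re : ℂ)) (Set.injOn_id _)
    (Finset.mem_image_of_mem Complex.ofReal (hs.mem_toFinset.mpr hx))

/-- On the finitely many eigenvalues involved `f` agrees with a polynomial, and polynomials
commute with algebra homomorphisms. -/
theorem applyFun_map (f : ℝ → ℝ) (φ : Matrix n n ℂ →ₐ[ℂ] Matrix m m ℂ) {A : Matrix n n ℂ}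
    (hA : A.IsHermitian) (hφA : (φ A).IsHermitian) :
    applyFun f (φ A) = φ (applyFun f A) := by
  obtain ⟨q, hq⟩ := exists_eval_ofReal_eq f
    ((Set.finite_range hA.eigenvalues).union (Set.finite_range hφA.eigenvalues))
  rw [applyFun_eq_aeval f hA q fun i => hq _ (by simp),
    applyFun_eq_aeval f hφA q fun i => hq _ (by simp), aeval_algHom_apply]

lemma applyFun_conjStarAlgAut (f : ℝ → ℝ) (U : unitary (Matrix n n ℂ)) {A : Matrix n n ℂ}
    (hA : A.IsHermitian) :
    applyFun f (conjStarAlgAut ℂ _ U A) = conjStarAlgAut ℂ _ U (applyFun f A) :=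
  applyFun_map f (conjStarAlgAut ℂ _ U : Matrix n n ℂ →ₐ[ℂ] Matrix n n ℂ) hA
    (IsSelfAdjoint.map hA (conjStarAlgAut ℂ _ U))

lemma applyFun_submatrix_equiv (f : ℝ → ℝ) {A : Matrix n n ℂ} (hA : A.IsHermitian) (e : m ≃ n) :
    applyFun f (A.submatrix e e) = (applyFun f A).submatrix e e :=
  applyFun_map f (reindexAlgEquiv ℂ ℂ e.symm : Matrix n n ℂ →ₐ[ℂ] Matrix m m ℂ) hA
    (hA.submatrix e)

lemma aeval_fromBlocks_zero (q : ℂ[X]) (A : Matrix n n ℂ) (B : Matrix m m ℂ) :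
    aeval (fromBlocks A 0 0 B) q = fromBlocks (aeval A q) 0 0 (aeval B q) := by
  induction q using Polynomial.induction_on' with
  | add p q hp hq => simp [hp, hq, fromBlocks_add]
  | monomial k c => simp [fromBlocks_diagonal_pow, Algebra.algebraMap_eq_smul_one, fromBlocks_smul]

lemma applyFun_fromBlocks_zero (f : ℝ → ℝ) {A : Matrix n n ℂ} {B : Matrix m m ℂ}
    (hA : A.IsHermitian) (hB : B.IsHermitian) :
    applyFun f (fromBlocks A 0 0 B) = fromBlocks (applyFun f A) 0 0 (applyFun f B) := by
  have hAB : (fromBlocks A 0 0 B).IsHermitian := hA.fromBlocks (by simp) hB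
  obtain ⟨q, hq⟩ := exists_eval_ofReal_eq f (((Set.finite_range hA.eigenvalues).union
    (Set.finite_range hB.eigenvalues)).union (Set.finite_range hAB.eigenvalues))
  rw [applyFun_eq_aeval f hA q fun i => hq _ (by simp),
    applyFun_eq_aeval f hB q fun i => hq _ (by simp),
    applyFun_eq_aeval f hAB q fun i => hq _ (by simp), aeval_fromBlocks_zero]

end SpectralCalculus

section OperatorConvex

variable {ι : Type*} [Fintype ι] [DecidableEq ι] {f : ℝ → ℝ}

theorem OperatorConvexOn.posSemidef_smul_add_smul_sub (hf : OperatorConvexOn (Set.Ioi 0) f)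
    {A B : Matrix ι ι ℂ} (hA : A.PosDef) (hB : B.PosDef) {lam : ℝ} (h₀ : 0 ≤ lam) (h₁ : lam ≤ 1) :
    ((lam : ℂ) • applyFun f A + ((1 - lam : ℝ) : ℂ) • applyFun f B -
      applyFun f ((lam : ℂ) • A + ((1 - lam : ℝ) : ℂ) • B)).PosSemidef := by
  set e := (Fintype.equivFin ι).symm
  have hA' := hA.submatrix e.injective
  have hB' := hB.submatrix e.injective
  have h := hf _ _ _ hA'.1 hB'.1 (fun i => hA'.eigenvalues_pos i) (fun i => hB'.eigenvalues_pos i)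
    lam h₀ h₁
  have hAB : ((lam : ℂ) • A + ((1 - lam : ℝ) : ℂ) • B).IsHermitian :=
    (hA.1.smul (Complex.conj_ofReal _)).add (hB.1.smul (Complex.conj_ofReal _))
  rw [applyFun_submatrix_equiv f hA.1, applyFun_submatrix_equiv f hB.1,
    show (lam : ℂ) • A.submatrix e e + ((1 - lam : ℝ) : ℂ) • B.submatrix e e =
      ((lam : ℂ) • A + ((1 - lam : ℝ) : ℂ) • B).submatrix e e from rfl,
    applyFun_submatrix_equiv f hAB] at h
  exact (posSemidef_submatrix_equiv e).mp h

end OperatorConvex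

section Dilation

variable {m l : Type*} [Fintype m] [Fintype l]

lemma fromBlocks_dilation_conj (V : Matrix l m ℂ) (D : Matrix l l ℂ) (hD : Dᴴ = D)
    (X : Matrix m m ℂ) (Y : Matrix l l ℂ) :
    fromBlocks 0 Vᴴ V D * fromBlocks X 0 0 Y * star (fromBlocks 0 Vᴴ V D) =
      fromBlocks (Vᴴ * Y * V) (Vᴴ * Y * D) (D * Y * V) (V * X * Vᴴ + D * Y * D) := by
  rw [star_eq_conjTranspose, fromBlocks_conjTranspose, fromBlocks_multiply, fromBlocks_multiply]
  simp [hD, Matrix.mul_assoc]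

lemma fromBlocks_dilation_conj_average (V : Matrix l m ℂ) (D : Matrix l l ℂ) (hD : Dᴴ = D)
    (X : Matrix m m ℂ) (Y : Matrix l l ℂ) :
    (1 / 2 : ℂ) • (fromBlocks 0 Vᴴ V D * fromBlocks X 0 0 Y * star (fromBlocks 0 Vᴴ V D)) +
      (1 / 2 : ℂ) • (fromBlocks 0 Vᴴ V (-D) * fromBlocks X 0 0 Y *
        star (fromBlocks 0 Vᴴ V (-D))) =
      fromBlocks (Vᴴ * Y * V) 0 0 (V * X * Vᴴ + D * Y * D) := by
  rw [fromBlocks_dilation_conj _ _ hD, fromBlocks_dilation_conj _ _ (by simp [hD]),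
    fromBlocks_smul, fromBlocks_smul, fromBlocks_add]
  simp only [Matrix.mul_neg, Matrix.neg_mul, neg_neg]
  congr 1 <;> module

variable [DecidableEq m] [DecidableEq l]

lemma Matrix.PosDef.fromBlocks_zero {A : Matrix m m ℂ} {B : Matrix l l ℂ} (hA : A.PosDef)
    (hB : B.PosDef) : (fromBlocks A 0 0 B).PosDef := by
  have := hA.isUnit.invertible
  refine (PosSemidef.posDef_iff_isUnit ?_).mpr
    (isUnit_fromBlocks_zero₂₁.mpr ⟨hA.isUnit, hB.isUnit⟩)
  simpa using (PosDef.fromBlocks₁₁ 0 B hA).mpr (by simpa using hB.posSemidef)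

lemma fromBlocks_dilation_mem_unitary {V : Matrix l m ℂ} {D : Matrix l l ℂ} (hV : Vᴴ * V = 1)
    (hD : Dᴴ = D) (hVD : Vᴴ * D = 0) (hDD : D * D = 1 - V * Vᴴ) :
    fromBlocks 0 Vᴴ V D ∈ unitary (Matrix (m ⊕ l) (m ⊕ l) ℂ) := by
  have hDV : D * V = 0 := by simpa [hD] using congrArg conjTranspose hVD
  rw [← Matrix.unitaryGroup, mem_unitaryGroup_iff', star_eq_conjTranspose,
    fromBlocks_conjTranspose, fromBlocks_multiply]
  simp [hV, hVD, hDV, hDD, hD, fromBlocks_one]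

lemma toBlocks₁₁_applyFun_dilation_conj (f : ℝ → ℝ) {V : Matrix l m ℂ} {D : Matrix l l ℂ}
    (hU : fromBlocks 0 Vᴴ V D ∈ unitary (Matrix (m ⊕ l) (m ⊕ l) ℂ)) (hD : Dᴴ = D)
    {A : Matrix l l ℂ} (hA : A.IsHermitian) :
    (applyFun f (fromBlocks 0 Vᴴ V D * fromBlocks 1 0 0 A *
      star (fromBlocks 0 Vᴴ V D))).toBlocks₁₁ = Vᴴ * applyFun f A * V := by
  have hM : (fromBlocks (1 : Matrix m m ℂ) 0 0 A).IsHermitian :=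
    isHermitian_one.fromBlocks (by simp) hA
  have h := applyFun_conjStarAlgAut f ⟨_, hU⟩ hM
  simp only [conjStarAlgAut_apply] at h
  rw [h, applyFun_fromBlocks_zero f isHermitian_one hA, fromBlocks_dilation_conj _ _ hD,
    toBlocks_fromBlocks₁₁]

theorem OperatorConvexOn.posSemidef_conj_applyFun_sub_applyFun_conj {f : ℝ → ℝ}
    (hf : OperatorConvexOn (Set.Ioi 0) f) {V : Matrix l m ℂ} (hV : Vᴴ * V = 1)
    {A : Matrix l l ℂ} (hA : A.PosDef) :
    (Vᴴ * applyFun f A * V - applyFun f (Vᴴ * A * V)).PosSemidef := by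
  set D := 1 - V * Vᴴ
  have hDH : Dᴴ = D := by simp [D]
  have hVD : Vᴴ * D = 0 := by simp [D, Matrix.mul_sub, ← Matrix.mul_assoc, hV]
  have hDD : D * D = 1 - V * Vᴴ := by
    simp only [D, Matrix.sub_mul, Matrix.mul_sub, Matrix.one_mul, Matrix.mul_one,
      Matrix.mul_assoc V, ← Matrix.mul_assoc Vᴴ, hV]
    abel
  let U₁ : unitary (Matrix (m ⊕ l) (m ⊕ l) ℂ) :=
    ⟨_, fromBlocks_dilation_mem_unitary hV hDH hVD hDD⟩
  let U₂ : unitary (Matrix (m ⊕ l) (m ⊕ l) ℂ) :=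
    ⟨_, fromBlocks_dilation_mem_unitary (D := -D) hV (by simp [hDH]) (by simp [hVD])
      (by simp [hDD])⟩
  have hM := (PosDef.one (n := m) (R := ℂ)).fromBlocks_zero hA
  have hconj : ∀ U : unitary (Matrix (m ⊕ l) (m ⊕ l) ℂ),
      (conjStarAlgAut ℂ _ U (fromBlocks 1 0 0 A)).PosDef :=
    fun U => (IsUnit.posDef_star_right_conjugate_iff Unitary.isUnit_coe).mpr hM
  have h := hf.posSemidef_smul_add_smul_sub (hconj U₁) (hconj U₂) (lam := 1 / 2) (by norm_num)
    (by norm_num)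
  have hE : (V * (1 : Matrix m m ℂ) * Vᴴ + D * A * D).IsHermitian := by
    simpa [hDH] using (isHermitian_mul_conjTranspose_self V).add
      (isHermitian_conjTranspose_mul_mul D hA.1)
  rw [show ((1 / 2 : ℝ) : ℂ) = 1 / 2 by norm_num, show ((1 - 1 / 2 : ℝ) : ℂ) = 1 / 2 by norm_num,
    conjStarAlgAut_apply, conjStarAlgAut_apply, fromBlocks_dilation_conj_average _ _ hDH,
    applyFun_fromBlocks_zero f (isHermitian_conjTranspose_mul_mul V hA.1) hE] at h
  have hcorner := h.submatrix Sum.inl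
  rw [show ∀ X Y Z : Matrix (m ⊕ l) (m ⊕ l) ℂ, ((1 / 2 : ℂ) • X + (1 / 2 : ℂ) • Y - Z).submatrix
      Sum.inl Sum.inl = (1 / 2 : ℂ) • X.toBlocks₁₁ + (1 / 2 : ℂ) • Y.toBlocks₁₁ - Z.toBlocks₁₁
      from fun _ _ _ => rfl, toBlocks₁₁_applyFun_dilation_conj f U₁.2 hDH hA.1,
    toBlocks₁₁_applyFun_dilation_conj f U₂.2 (by simp [hDH]) hA.1,
    toBlocks_fromBlocks₁₁] at hcorner
  convert hcorner using 2
  module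

end Dilation

section QuadraticForm

variable {m l : Type*} [Fintype m] [Fintype l]

lemma re_dotProduct_mulVec_le_of_posSemidef_sub {P Q : Matrix m m ℂ} (h : (P - Q).PosSemidef)
    (x : m → ℂ) : (star x ⬝ᵥ (Q *ᵥ x)).re ≤ (star x ⬝ᵥ (P *ᵥ x)).re := by
  simpa [sub_mulVec, dotProduct_sub] using (Complex.le_def.mp (h.dotProduct_mulVec_nonneg x)).1

lemma dotProduct_conjTranspose_mul_mul_mulVec (V : Matrix l m ℂ) (F : Matrix l l ℂ)
    (x : m → ℂ) : star x ⬝ᵥ ((Vᴴ * F * V) *ᵥ x) = star (V *ᵥ x) ⬝ᵥ (F *ᵥ (V *ᵥ x)) := by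
  simp only [star_mulVec, dotProduct_mulVec, vecMul_vecMul, ← mulVec_mulVec]

end QuadraticForm

section JensenOperatorInequality

variable {m l₁ l₂ : Type*} [Fintype m] [DecidableEq m] [Fintype l₁] [DecidableEq l₁]
  [Fintype l₂] [DecidableEq l₂] {f : ℝ → ℝ}

theorem OperatorConvexOn.posSemidef_conj_add_conj_applyFun_sub
    (hf : OperatorConvexOn (Set.Ioi 0) f) {V₁ : Matrix l₁ m ℂ} {V₂ : Matrix l₂ m ℂ}
    (hV : V₁ᴴ * V₁ + V₂ᴴ * V₂ = 1) {A₁ : Matrix l₁ l₁ ℂ} {A₂ : Matrix l₂ l₂ ℂ}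
    (hA₁ : A₁.PosDef) (hA₂ : A₂.PosDef) :
    (V₁ᴴ * applyFun f A₁ * V₁ + V₂ᴴ * applyFun f A₂ * V₂ -
      applyFun f (V₁ᴴ * A₁ * V₁ + V₂ᴴ * A₂ * V₂)).PosSemidef := by
  have hblock : ∀ (X : Matrix l₁ l₁ ℂ) (Y : Matrix l₂ l₂ ℂ),
      (fromRows V₁ V₂)ᴴ * fromBlocks X 0 0 Y * fromRows V₁ V₂ = V₁ᴴ * X * V₁ + V₂ᴴ * Y * V₂ := by
    intro X Y
    rw [conjTranspose_fromRows_eq_fromCols_conjTranspose, fromCols_mul_fromBlocks,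
      fromCols_mul_fromRows]
    simp
  have h := hf.posSemidef_conj_applyFun_sub_applyFun_conj (V := fromRows V₁ V₂)
    (by rw [conjTranspose_fromRows_eq_fromCols_conjTranspose, fromCols_mul_fromRows, hV])
    (hA₁.fromBlocks_zero hA₂)
  rwa [applyFun_fromBlocks_zero f hA₁.1 hA₂.1, hblock, hblock] at h

theorem OperatorConvexOn.re_dotProduct_applyFun_le
    (hf : OperatorConvexOn (Set.Ioi 0) f) {V₁ : Matrix l₁ m ℂ} {V₂ : Matrix l₂ m ℂ}
    (hV : V₁ᴴ * V₁ + V₂ᴴ * V₂ = 1) {A₁ : Matrix l₁ l₁ ℂ} {A₂ : Matrix l₂ l₂ ℂ}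
    (hA₁ : A₁.PosDef) (hA₂ : A₂.PosDef) (x : m → ℂ) :
    (star x ⬝ᵥ (applyFun f (V₁ᴴ * A₁ * V₁ + V₂ᴴ * A₂ * V₂) *ᵥ x)).re ≤
      (star (V₁ *ᵥ x) ⬝ᵥ (applyFun f A₁ *ᵥ (V₁ *ᵥ x))).re +
        (star (V₂ *ᵥ x) ⬝ᵥ (applyFun f A₂ *ᵥ (V₂ *ᵥ x))).re := by
  have h := re_dotProduct_mulVec_le_of_posSemidef_sub
    (hf.posSemidef_conj_add_conj_applyFun_sub hV hA₁ hA₂) x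
  rwa [add_mulVec, dotProduct_add, Complex.add_re, dotProduct_conjTranspose_mul_mul_mulVec,
    dotProduct_conjTranspose_mul_mul_mulVec] at h

end JensenOperatorInequality

section SquareRoot

variable {n : Type*} [Fintype n] [DecidableEq n] {A : Matrix n n ℂ}

lemma msqrt_of_posSemidef (hA : A.PosSemidef) :
    msqrt A = conjStarAlgAut ℂ _ hA.1.eigenvectorUnitary
      (diagonal fun i => (√(hA.1.eigenvalues i) : ℂ)) := by
  rw [msqrt, dif_pos hA]
  rfl

lemma msqrt_mul_self (hA : A.PosSemidef) : msqrt A * msqrt A = A := by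
  conv_rhs => rw [hA.1.spectral_theorem]
  rw [msqrt_of_posSemidef hA, ← map_mul, diagonal_mul_diagonal]
  congr 2
  funext i
  rw [← Complex.ofReal_mul, Real.mul_self_sqrt (hA.eigenvalues_nonneg i)]
  rfl

lemma conjTranspose_msqrt (hA : A.PosSemidef) : (msqrt A)ᴴ = msqrt A := by
  rw [msqrt_of_posSemidef hA, ← star_eq_conjTranspose, ← map_star, star_eq_conjTranspose,
    diagonal_conjTranspose]
  congr 2
  funext i
  simp

lemma isUnit_msqrt (hA : A.PosDef) : IsUnit (msqrt A) :=
  isUnit_of_mul_isUnit_left ((msqrt_mul_self hA.posSemidef).symm ▸ hA.isUnit)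

lemma inv_msqrt_mul_inv_msqrt (hA : A.PosSemidef) : (msqrt A)⁻¹ * (msqrt A)⁻¹ = A⁻¹ := by
  rw [← Matrix.mul_inv_rev, msqrt_mul_self hA]

lemma msqrt_mul_inv_mul_msqrt (hA : A.PosDef) : msqrt A * A⁻¹ * msqrt A = 1 := by
  have hs := (isUnit_iff_isUnit_det _).mp (isUnit_msqrt hA)
  rw [← inv_msqrt_mul_inv_msqrt hA.posSemidef, ← Matrix.mul_assoc, mul_nonsing_inv _ hs,
    Matrix.one_mul, nonsing_inv_mul _ hs]

lemma inv_msqrt_mul_mul_inv_msqrt (hA : A.PosDef) : (msqrt A)⁻¹ * A * (msqrt A)⁻¹ = 1 := by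
  have hs := (isUnit_iff_isUnit_det _).mp (isUnit_msqrt hA)
  nth_rw 2 [← msqrt_mul_self hA.posSemidef]
  rw [← Matrix.mul_assoc, nonsing_inv_mul _ hs, Matrix.one_mul, mul_nonsing_inv _ hs]

variable {ρ τ : Matrix n n ℂ}

lemma inv_msqrt_mul_msqrt_conj (hρ : ρ.PosDef) (hτ : τ.PosSemidef) (X : Matrix n n ℂ) :
    (msqrt ρ)⁻¹ * msqrt τ * X * ((msqrt ρ)⁻¹ * msqrt τ)ᴴ =
      (msqrt ρ)⁻¹ * (msqrt τ * X * msqrt τ) * (msqrt ρ)⁻¹ := by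
  rw [conjTranspose_mul, conjTranspose_nonsing_inv, conjTranspose_msqrt hρ.posSemidef,
    conjTranspose_msqrt hτ]
  simp only [Matrix.mul_assoc]

lemma inv_msqrt_mul_msqrt_mul_conjTranspose (hρ : ρ.PosDef) (hτ : τ.PosSemidef) :
    (msqrt ρ)⁻¹ * msqrt τ * ((msqrt ρ)⁻¹ * msqrt τ)ᴴ = (msqrt ρ)⁻¹ * τ * (msqrt ρ)⁻¹ := by
  simpa [msqrt_mul_self hτ] using inv_msqrt_mul_msqrt_conj hρ hτ 1

lemma inv_msqrt_mul_msqrt_conj_inv (hρ : ρ.PosDef) (hτ : τ.PosDef) :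
    (msqrt ρ)⁻¹ * msqrt τ * τ⁻¹ * ((msqrt ρ)⁻¹ * msqrt τ)ᴴ = ρ⁻¹ := by
  rw [inv_msqrt_mul_msqrt_conj hρ hτ.posSemidef, msqrt_mul_inv_mul_msqrt hτ, Matrix.mul_one,
    inv_msqrt_mul_inv_msqrt hρ.posSemidef]

end SquareRoot

section Kronecker

variable {k n : Type*} [Fintype k] [DecidableEq k] [Fintype n]

lemma one_kronecker_transpose_mulVec_vecOf {n' : Type*} (C : Matrix n n' ℂ) (X : Matrix k n ℂ) :
    ((1 : Matrix k k ℂ) ⊗ₖ Cᵀ) *ᵥ vecOf X = vecOf (X * C) := by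
  funext ⟨i, j⟩
  simp [mulVec, dotProduct, vecOf, mul_apply, Fintype.sum_prod_type, one_apply, mul_comm]

lemma conjTranspose_one_kronecker_mul_kronecker_mul (C : Matrix n n ℂ) (σ : Matrix k k ℂ)
    (X : Matrix n n ℂ) :
    ((1 : Matrix k k ℂ) ⊗ₖ Cᵀ)ᴴ * (σ ⊗ₖ Xᵀ) * (1 ⊗ₖ Cᵀ) = σ ⊗ₖ (C * X * Cᴴ)ᵀ := by
  rw [conjTranspose_kronecker, conjTranspose_one, ← mul_kronecker_mul, ← mul_kronecker_mul]
  simp only [Matrix.one_mul, Matrix.mul_one, transpose_mul, Matrix.mul_assoc]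
  rfl

lemma conjTranspose_one_kronecker_mul_one_kronecker [DecidableEq n] (C : Matrix n n ℂ) :
    ((1 : Matrix k k ℂ) ⊗ₖ Cᵀ)ᴴ * (1 ⊗ₖ Cᵀ) = 1 ⊗ₖ (C * Cᴴ)ᵀ := by
  simpa using conjTranspose_one_kronecker_mul_kronecker_mul C (1 : Matrix k k ℂ) 1

end Kronecker

/-- sub-additivity of the quantum f-relative entropy. -/
theorem Srel_subadditive {d : ℕ} (f : ℝ → ℝ)
    (hf : OperatorConvexOn (Set.Ioi 0) f)
    (ρ₁ ρ₂ σ₁ σ₂ : Matrix (Fin d) (Fin d) ℂ)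
    (hρ1 : ρ₁.PosDef) (hρ2 : ρ₂.PosDef) (hσ1 : σ₁.PosDef) (hσ2 : σ₂.PosDef) :
    Srel f (ρ₁ + ρ₂) (σ₁ + σ₂) ≤ Srel f ρ₁ σ₁ + Srel f ρ₂ σ₂ := by
  have hρ := hρ1.add hρ2
  set s := msqrt (ρ₁ + ρ₂)
  set C₁ := s⁻¹ * msqrt ρ₁
  set C₂ := s⁻¹ * msqrt ρ₂
  have hC : C₁ * C₁ᴴ + C₂ * C₂ᴴ = 1 := by
    rw [inv_msqrt_mul_msqrt_mul_conjTranspose hρ hρ1.posSemidef,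
      inv_msqrt_mul_msqrt_mul_conjTranspose hρ hρ2.posSemidef, ← Matrix.add_mul, ← Matrix.mul_add,
      inv_msqrt_mul_mul_inv_msqrt hρ]
  have hV : ((1 : Matrix (Fin d) (Fin d) ℂ) ⊗ₖ C₁ᵀ)ᴴ * (1 ⊗ₖ C₁ᵀ) +
      ((1 : Matrix (Fin d) (Fin d) ℂ) ⊗ₖ C₂ᵀ)ᴴ * (1 ⊗ₖ C₂ᵀ) = 1 := by
    rw [conjTranspose_one_kronecker_mul_one_kronecker,
      conjTranspose_one_kronecker_mul_one_kronecker, ← kronecker_add, ← transpose_add, hC,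
      transpose_one, one_kronecker_one]
  have h := hf.re_dotProduct_applyFun_le hV (hσ1.kronecker hρ1.inv.transpose)
    (hσ2.kronecker hρ2.inv.transpose) (vecOf s)
  have hs := (isUnit_iff_isUnit_det _).mp (isUnit_msqrt hρ)
  have hsC₁ : s * C₁ = msqrt ρ₁ := mul_nonsing_inv_cancel_left _ _ hs
  have hsC₂ : s * C₂ = msqrt ρ₂ := mul_nonsing_inv_cancel_left _ _ hs
  rwa [conjTranspose_one_kronecker_mul_kronecker_mul, conjTranspose_one_kronecker_mul_kronecker_mul,
    inv_msqrt_mul_msqrt_conj_inv hρ hρ1, inv_msqrt_mul_msqrt_conj_inv hρ hρ2, ← add_kronecker,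
    one_kronecker_transpose_mulVec_vecOf, one_kronecker_transpose_mulVec_vecOf,
    hsC₁, hsC₂] at h
end
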